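/- Fix a finite nonempty alphabet Σ equipped with a linear order, and let Ξ := Σ ⊕ Σ'' ⊕ Sym with φ : FL_Σ → Ξ* the canonical encoding. Define the stable failures relation fail_Σ ⊆ FL_Σ × (Σ* × (Finset Σ ∪ {•})), relating the observation ⟨A₀,a₁,…,aₙ,Aₙ⟩ to the pair (a₁…aₙ, X) for every X ⊆ Σ \ Aₙ when Aₙ ≠ •, and to the pair (a₁…aₙ, •) when Aₙ = •. Let Θ := Σ ⊕ Σ' ⊕ Sym, where Σ' is a disjoint copy {a' : a ∈ Σ} of Σ, and define the output encoding ψ by: ψ(s, •) = s, and ψ(s, X) = s followed by the symbol ⟨, the primed copies of the elements of X in increasing order, and the symbol ⟩. Then: (a) there exists a nondeterministic finite automaton with finitely many states over the alphabet Ξ ⊕ Θ recognising the relation {(φ(x), ψ(y)) : (x, y) ∈ fail_Σ}; and (b) ψ is order-reflecting, i.e. whenever ψ(y₁) is a prefix of ψ(y₂) then y₁ ≼ y₂, where ≼ is the relation induced by fail_Σ from the extension order on FL_Σ. -/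

import Mathlib

/-- A finite linear observation over alphabet `α`: an initial annotation `A₀`
(`none` = `•`, `some A` = a stable acceptance set) together with a list of pairs
`(aᵢ, Aᵢ)` of an event and the following annotation. -/
abbrev FLObs (α : Type) := Option (Finset α) × List (α × Option (Finset α))

/-- Extension on annotations: either they are equal or the first is `•`. -/
def optExt {α : Type} (A B : Option (Finset α)) : Prop := A = B ∨ A = none

/-- The extension order on finite linear observations. -/
def extLE {α : Type} (u v : FLObs α) : Prop :=
  optExt u.1 v.1 ∧ u.2.length ≤ v.2.length ∧
    ∀ (i : ℕ) (hi : i < u.2.length) (hj : i < v.2.length),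
      (u.2.get ⟨i, hi⟩).1 = (v.2.get ⟨i, hj⟩).1 ∧
        optExt (u.2.get ⟨i, hi⟩).2 (v.2.get ⟨i, hj⟩).2

/-- The four symbols `⟨`, `⟩`, `,`, `•` used by the canonical encoding. -/
inductive MSym : Type
  | lang | rang | comma | bullet
deriving DecidableEq

instance : Fintype MSym where
  elems := {MSym.lang, MSym.rang, MSym.comma, MSym.bullet}
  complete := by intro x; cases x <;> simp

/-- The alphabet `Ξ = Σ ⊕ Σ'' ⊕ MSym` of the canonical encoding: `Sum.inl a` is the
event `a`, `Sum.inr (Sum.inl a)` is the double-primed copy `a''`, and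
`Sum.inr (Sum.inr s)` is a symbol. -/
abbrev Xi (α : Type) := α ⊕ α ⊕ MSym

/-- Encoding of an annotation: `•` is the symbol `•`, a set is the list of the
double-primed copies of its elements in increasing order. -/
def encAnnXi {α : Type} [LinearOrder α] : Option (Finset α) → List (Xi α)
  | none => [Sum.inr (Sum.inr MSym.bullet)]
  | some A => (A.sort (· ≤ ·)).map (fun a => Sum.inr (Sum.inl a))

/-- The canonical encoding `φ` of finite linear observations: the observation
`⟨A₀, a₁, A₁, …, aₙ, Aₙ⟩` is written as the string `⟨ A₀ , a₁ , A₁ , … , aₙ , Aₙ ⟩`. -/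
def phi {α : Type} [LinearOrder α] (u : FLObs α) : List (Xi α) :=
  [Sum.inr (Sum.inr MSym.lang)] ++ encAnnXi u.1 ++
    (u.2.map (fun p => [Sum.inr (Sum.inr MSym.comma), Sum.inl p.1,
      Sum.inr (Sum.inr MSym.comma)] ++ encAnnXi p.2)).flatten ++
    [Sum.inr (Sum.inr MSym.rang)]

/-- An NFA over `α ⊕ β` recognises a relation `R ⊆ α* × β*` if `R s t` holds exactly
when the NFA accepts some interleaving of `s` (as left letters) and `t` (as right
letters). -/
def Recognises {α β Q : Type} (A : NFA (α ⊕ β) Q) (R : List α → List β → Prop) : Prop :=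
  ∀ (s : List α) (t : List β),
    R s t ↔ ∃ w ∈ A.accepts, w.filterMap Sum.getLeft? = s ∧ w.filterMap Sum.getRight? = t

/-- The relation on `O` induced by a relation `M : S → O → Prop` from a preorder
`le` on `S`. -/
def inducedRel {S O : Type} (le : S → S → Prop) (M : S → O → Prop) (y₁ y₂ : O) : Prop :=
  ∀ b, M b y₂ → ∃ a, M a y₁ ∧ le a b

/-- The final annotation `Aₙ` of an observation. -/
def lastAnn {α : Type} (u : FLObs α) : Option (Finset α) :=
  match u.2.getLast? with
  | none => u.1
  | some p => p.2


/-- Compatibility of a refusal annotation `X` with an acceptance annotation `A`: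
if `A = •` then `X = •`; if `A` is an acceptance set then `X` is a refusal set
disjoint from `A` (i.e. `X ⊆ Σ \ A`). -/
def compat {α : Type} (A X : Option (Finset α)) : Prop :=
  match A, X with
  | none, none => True
  | some A, some Y => ∀ a ∈ Y, a ∉ A
  | _, _ => False

/-- The output alphabet `Θ = Σ ⊕ Σ' ⊕ Sym`: `Sum.inl a` is the event `a`,
`Sum.inr (Sum.inl a)` is the primed copy `a'`, and `Sum.inr (Sum.inr s)` a symbol. -/
abbrev Theta (α : Type) := α ⊕ α ⊕ MSym

/-- Encoding of an optional refusal set: `•` contributes the empty word and a set `X`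
contributes `⟨` followed by the primed copies of its elements in increasing order
followed by `⟩`. -/
def encRef {α : Type} [LinearOrder α] : Option (Finset α) → List (Theta α)
  | none => []
  | some X => [Sum.inr (Sum.inr MSym.lang)] ++
      (X.sort (· ≤ ·)).map (fun a => Sum.inr (Sum.inl a)) ++ [Sum.inr (Sum.inr MSym.rang)]

/-- The stable failures relation: it relates `⟨A₀,a₁,…,aₙ,Aₙ⟩` to the pairs
`(a₁…aₙ, X)` for every refusal `X ⊆ Σ \ Aₙ` if `Aₙ ≠ •`, and to `(a₁…aₙ, •)`
if `Aₙ = •`. -/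
def failRel {α : Type} (u : FLObs α) (y : List α × Option (Finset α)) : Prop :=
  y.1 = u.2.map Prod.fst ∧ compat (lastAnn u) y.2

/-- The output encoding for failures: `ψ (s, •) = s` and `ψ (s, X) = s ⟨ X' ⟩` with the
elements of `X` primed, in increasing order. -/
def psiF {α : Type} [LinearOrder α] (y : List α × Option (Finset α)) : List (Theta α) :=
  y.1.map Sum.inl ++ encRef y.2

/-!
(a) The interleavings of `φ x` with `ψ y`, for `(x, y)` in `fail_Σ`, are exactly the words read by
an automaton with states `init`, `last A` and `done`, whose transitions read whole words: `⟨ A₀`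
leads from `init` to `last A₀`, the block `, a , B` (interleaved with the output `a`) leads from
`last A` to `last B`, and the closing `ψ`-part of a refusal `X` followed by `⟩` leads from `last A`
to `done` when `X` is compatible with `A`. There are finitely many labels, so reading them letter
by letter gives an ordinary finite automaton.

(b) If `y₁` carries a refusal set, `ψ y₁` ends in `⟩`, which occurs in `ψ y₂` at most at its end,
so `y₁ = y₂`. Otherwise the trace of `y₁` is a prefix of that of `y₂`, and any observation of `y₂`,
cut down to that prefix and with all annotations replaced by `•`, observes `y₁` below it.
-/

structure WordNFA (β σ : Type) where
  trans : Finset (σ × List β × σ)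
  start : Set σ
  accept : Set σ

namespace WordNFA

variable {β σ : Type} (M : WordNFA β σ)

inductive Reads : σ → List β → σ → Prop
  | nil (p : σ) : Reads p [] p
  | cons {p q r : σ} {u w : List β} : (p, u, q) ∈ M.trans → Reads q w r → Reads p (u ++ w) r

def accepts : Language β := {w | ∃ p ∈ M.start, ∃ q ∈ M.accept, M.Reads p w q}

/-- What may remain to be read of a transition in progress. -/
def pendingWords : Set (List β) := insert [] (⋃ e ∈ M.trans, {u | u <:+ e.2.1})

theorem finite_pendingWords : M.pendingWords.Finite := by
  refine .insert _ (M.trans.finite_toSet.biUnion fun e _ => ?_)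
  exact (List.finite_toSet e.2.1.tails).subset fun u hu => (List.mem_tails u _).2 hu

instance : Finite M.pendingWords := M.finite_pendingWords.to_subtype

theorem nil_mem_pendingWords : [] ∈ M.pendingWords := Set.mem_insert _ _

theorem mem_pendingWords_of_cons {b : β} {u : List β} (h : b :: u ∈ M.pendingWords) :
    u ∈ M.pendingWords := by
  have h' : b :: u = [] ∨ ∃ e ∈ M.trans, b :: u <:+ e.2.1 := by simpa [pendingWords] using h
  obtain h' | ⟨e, he, hu⟩ := h'
  · exact absurd h' (List.cons_ne_nil b u)
  · exact Set.mem_insert_of_mem _ (Set.mem_biUnion he ((List.suffix_cons b u).trans hu))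

theorem label_mem_pendingWords {e : σ × List β × σ} (he : e ∈ M.trans) :
    e.2.1 ∈ M.pendingWords :=
  Set.mem_insert_of_mem _ (Set.mem_biUnion he List.suffix_rfl)

/-- In the state `(q, v)` the automaton still has to read `v` to complete a transition into `q`. -/
def toNFA : NFA β (σ × M.pendingWords) where
  step s a := {t | s.2.1 = a :: t.2.1 ∧ t.1 = s.1 ∨ s.2.1 = [] ∧ (s.1, a :: t.2.1, t.1) ∈ M.trans}
  start := {s | s.1 ∈ M.start ∧ s.2.1 = []}
  accept := {s | s.1 ∈ M.accept ∧ s.2.1 = []}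

theorem reads_of_path {s t : σ × M.pendingWords} {x : List β} (p : M.toNFA.Path s t x)
    (ht : t.2.1 = []) : ∃ w, x = s.2.1 ++ w ∧ M.Reads s.1 w t.1 := by
  induction p with
  | nil s => exact ⟨[], by simp [ht], .nil _⟩
  | cons t s u a x hstep _ ih =>
    obtain ⟨w, rfl, hw⟩ := ih ht
    rcases hstep with ⟨hs, hts⟩ | ⟨hs, he⟩
    · exact ⟨w, by simp [hs], hts ▸ hw⟩
    · exact ⟨(a :: t.2.1) ++ w, by simp [hs], .cons he hw⟩

theorem path_from_pending {q : σ} {t : σ × M.pendingWords} {x : List β}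
    (p : M.toNFA.Path (q, ⟨[], M.nil_mem_pendingWords⟩) t x) :
    ∀ (v : List β) (hv : v ∈ M.pendingWords), Nonempty (M.toNFA.Path (q, ⟨v, hv⟩) t (v ++ x))
  | [], _ => ⟨p⟩
  | b :: v, hv =>
    let ⟨p'⟩ := path_from_pending p v (M.mem_pendingWords_of_cons hv)
    ⟨.cons (q, ⟨v, _⟩) _ _ b _ (Or.inl ⟨rfl, rfl⟩) p'⟩

theorem path_of_reads (hne : ∀ e ∈ M.trans, e.2.1 ≠ []) {q r : σ} {w : List β}
    (h : M.Reads q w r) : Nonempty (M.toNFA.Path (q, ⟨[], M.nil_mem_pendingWords⟩)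
      (r, ⟨[], M.nil_mem_pendingWords⟩) w) := by
  induction h with
  | nil p => exact ⟨.nil _⟩
  | @cons p q r u w he _ ih =>
    obtain ⟨b, u, rfl⟩ := List.exists_cons_of_ne_nil (hne _ he)
    have hu := M.mem_pendingWords_of_cons (M.label_mem_pendingWords he)
    obtain ⟨p'⟩ := ih
    obtain ⟨p''⟩ := M.path_from_pending p' u hu
    exact ⟨.cons (q, ⟨u, hu⟩) _ _ b _ (Or.inr ⟨rfl, he⟩) p''⟩

theorem toNFA_accepts (hne : ∀ e ∈ M.trans, e.2.1 ≠ []) : M.toNFA.accepts = M.accepts := by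
  ext x
  rw [NFA.accepts_iff_exists_path]
  constructor
  · rintro ⟨s, ⟨hs, hs'⟩, t, ⟨ht, ht'⟩, ⟨p⟩⟩
    obtain ⟨w, rfl, hw⟩ := M.reads_of_path p ht'
    exact ⟨s.1, hs, t.1, ht, by simpa [hs'] using hw⟩
  · rintro ⟨p, hp, q, hq, h⟩
    exact ⟨_, ⟨hp, rfl⟩, _, ⟨hq, rfl⟩, M.path_of_reads hne h⟩

end WordNFA

theorem NFA.exists_fin_accepts_eq {β σ : Type} [Finite σ] (M : NFA β σ) :
    ∃ (n : ℕ) (A : NFA β (Fin n)), A.accepts = M.accepts := by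
  obtain ⟨n, ⟨e⟩⟩ := Finite.exists_equiv_fin (Set σ)
  exact ⟨n, (DFA.reindex e M.toDFA).toNFA, by simp⟩

section Observations

variable {α : Type}

theorem lastAnn_cons (A B : Option (Finset α)) (a : α) (l : List (α × Option (Finset α))) :
    lastAnn (A, (a, B) :: l) = lastAnn (B, l) := by
  cases l <;> simp [lastAnn, List.getLast?_cons]

theorem lastAnn_forget (l : List (α × Option (Finset α))) :
    lastAnn (none, l.map fun p => (p.1, none)) = none := by
  induction l with
  | nil => rfl
  | cons p l ih => rwa [List.map_cons, lastAnn_cons]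

theorem extLE_refl (u : FLObs α) : extLE u u :=
  ⟨Or.inl rfl, le_rfl, fun _ _ _ => ⟨rfl, Or.inl rfl⟩⟩

theorem exists_failRel_extLE_of_prefix {s : List α} {b : FLObs α}
    (hs : s <+: b.2.map Prod.fst) : ∃ a, failRel a (s, none) ∧ extLE a b := by
  refine ⟨(none, (b.2.take s.length).map fun p => (p.1, none)), ⟨?_, ?_⟩, Or.inr rfl, by simp, ?_⟩
  · simpa [List.map_take, Function.comp_def] using List.prefix_iff_eq_take.1 hs
  · rw [lastAnn_forget]
    trivial
  · intro i hi hj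
    simp [optExt]

end Observations

section OutputEncoding

variable {α : Type} [LinearOrder α]

theorem filterMap_getLeft_psiF (y : List α × Option (Finset α)) :
    (psiF y).filterMap Sum.getLeft? = y.1 := by
  obtain ⟨s, _ | X⟩ := y <;>
    simp [psiF, encRef, List.filterMap_cons, Function.comp_def]

theorem encRef_injective : Function.Injective (encRef : Option (Finset α) → List (Theta α))
  | none, none, _ => rfl
  | none, some _, h | some _, none, h => by simp [encRef] at h
  | some X, some Y, h => by
    simp only [encRef, List.cons_append, List.cons.injEq, List.append_cancel_right_eq, true_and] at h
    have hsort : X.sort (· ≤ ·) = Y.sort (· ≤ ·) :=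
      List.map_injective_iff.2 (fun _ _ h => by simpa using h) h
    simpa using congrArg List.toFinset hsort

theorem psiF_injective : Function.Injective (psiF : List α × Option (Finset α) → List (Theta α)) := by
  intro y₁ y₂ h
  have h₁ : y₁.1 = y₂.1 := by rw [← filterMap_getLeft_psiF y₁, h, filterMap_getLeft_psiF]
  unfold psiF at h
  rw [h₁] at h
  exact Prod.ext h₁ (encRef_injective (List.append_cancel_left h))

theorem psiF_some (s : List α) (X : Finset α) :
    psiF (s, some X) = (s.map Sum.inl ++ Sum.inr (Sum.inr MSym.lang) ::
      (X.sort (· ≤ ·)).map (Sum.inr ∘ Sum.inl)) ++ [Sum.inr (Sum.inr MSym.rang)] := by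
  simp [psiF, encRef, Function.comp_def]

theorem eq_of_psiF_some_prefix {s : List α} {X : Finset α} {y : List α × Option (Finset α)}
    (h : psiF (s, some X) <+: psiF y) : (s, some X) = y := by
  obtain ⟨t, _ | Y⟩ := y
  · have hmem := h.subset (by simp [psiF_some] : Sum.inr (Sum.inr MSym.rang) ∈ psiF (s, some X))
    simp [psiF, encRef] at hmem
  · rw [psiF_some, psiF_some] at h
    rcases List.prefix_concat_iff.1 h with h | h
    · exact psiF_injective (by rw [psiF_some, psiF_some, h])
    · have := h.subset (List.mem_concat_self ..)
      simp at this

theorem inducedRel_extLE_failRel_of_psiF_prefix {y₁ y₂ : List α × Option (Finset α)}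
    (h : psiF y₁ <+: psiF y₂) : inducedRel extLE failRel y₁ y₂ := by
  obtain ⟨s, _ | X⟩ := y₁
  · intro b hb
    have hs : s <+: y₂.1 := by simpa [filterMap_getLeft_psiF] using h.filterMap Sum.getLeft?
    exact exists_failRel_extLE_of_prefix (hb.1 ▸ hs)
  · obtain rfl := eq_of_psiF_some_prefix h
    exact fun b hb => ⟨b, hb, extLE_refl b⟩

end OutputEncoding

namespace FailuresTransducer

inductive State (α : Type)
  | init
  | last (A : Option (Finset α))
  | done
  deriving DecidableEq, Fintype

variable {α : Type} [LinearOrder α]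

abbrev Letter (α : Type) := Xi α ⊕ Theta α

def openLabel (A : Option (Finset α)) : List (Letter α) :=
  Sum.inl (Sum.inr (Sum.inr MSym.lang)) :: (encAnnXi A).map Sum.inl

def eventLabel (a : α) (B : Option (Finset α)) : List (Letter α) :=
  [Sum.inl (Sum.inr (Sum.inr MSym.comma)), Sum.inl (Sum.inl a), Sum.inr (Sum.inl a),
    Sum.inl (Sum.inr (Sum.inr MSym.comma))] ++ (encAnnXi B).map Sum.inl

def closeLabel (X : Option (Finset α)) : List (Letter α) :=
  (encRef X).map Sum.inr ++ [Sum.inl (Sum.inr (Sum.inr MSym.rang))]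

def word (x : FLObs α) (X : Option (Finset α)) : List (Letter α) :=
  openLabel x.1 ++ (x.2.map fun p => eventLabel p.1 p.2).flatten ++ closeLabel X

theorem filterMap_getLeft_word (x : FLObs α) (X : Option (Finset α)) :
    (word x X).filterMap Sum.getLeft? = phi x := by
  simp [word, phi, openLabel, eventLabel, closeLabel, List.filterMap_cons, List.filterMap_flatten,
    Function.comp_def]

theorem filterMap_getRight_word (x : FLObs α) (X : Option (Finset α)) :
    (word x X).filterMap Sum.getRight? = psiF (x.2.map Prod.fst, X) := by
  obtain ⟨A, l⟩ := x
  simp only [word, psiF, openLabel, eventLabel, closeLabel, List.filterMap_append,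
    List.filterMap_flatten, List.map_map]
  induction l <;> simp_all [List.filterMap_cons, Function.comp_def]

variable [Fintype α]

open Classical in
noncomputable def trans : Finset (State α × List (Letter α) × State α) :=
  Finset.univ.image (fun A => (.init, openLabel A, .last A)) ∪
  Finset.univ.image (fun p : Option (Finset α) × α × Option (Finset α) =>
    (.last p.1, eventLabel p.2.1 p.2.2, .last p.2.2)) ∪
  (Finset.univ.filter fun p : Option (Finset α) × Option (Finset α) => compat p.1 p.2).image
    (fun p => (.last p.1, closeLabel p.2, .done))

theorem mem_trans {e : State α × List (Letter α) × State α} :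
    e ∈ trans ↔ (∃ A, e = (.init, openLabel A, .last A)) ∨
      (∃ A a B, e = (.last A, eventLabel a B, .last B)) ∨
      ∃ A X, compat A X ∧ e = (.last A, closeLabel X, .done) := by
  simp [trans, eq_comm]

noncomputable def wordNFA : WordNFA (Letter α) (State α) :=
  ⟨trans, {.init}, {.done}⟩

theorem label_ne_nil : ∀ e ∈ (wordNFA (α := α)).trans, e.2.1 ≠ [] := by
  intro e he
  rcases mem_trans.1 he with ⟨A, rfl⟩ | ⟨A, a, B, rfl⟩ | ⟨A, X, -, rfl⟩ <;>
    simp [openLabel, eventLabel, closeLabel]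

theorem eq_nil_of_reads_done {w : List (Letter α)} {q : State α}
    (h : wordNFA.Reads .done w q) : w = [] := by
  cases h with
  | nil => rfl
  | cons he _ => simp [wordNFA, mem_trans] at he

theorem exists_of_reads_last_done {A : Option (Finset α)} {w : List (Letter α)}
    (h : wordNFA.Reads (.last A) w .done) : ∃ l X, compat (lastAnn (A, l)) X ∧
      w = (l.map fun p => eventLabel p.1 p.2).flatten ++ closeLabel X := by
  generalize hp : State.last A = p at h
  generalize hq : State.done = q at h
  induction h generalizing A with
  | nil => cases hp.trans hq.symm
  | cons he hw ih =>
    subst hp hq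
    rcases mem_trans.1 he with ⟨_, he⟩ | ⟨_, a, B, he⟩ | ⟨_, X, hc, he⟩ <;>
      simp only [Prod.ext_iff, State.last.injEq] at he
    · cases he.1
    · obtain ⟨rfl, rfl, rfl⟩ := he
      obtain ⟨l, X, hc, rfl⟩ := ih rfl rfl
      exact ⟨(a, B) :: l, X, by rwa [lastAnn_cons], by simp⟩
    · obtain ⟨rfl, rfl, rfl⟩ := he
      exact ⟨[], X, hc, by simp [eq_nil_of_reads_done hw]⟩

theorem reads_last_done_of_compat {A X : Option (Finset α)} {l : List (α × Option (Finset α))}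
    (h : compat (lastAnn (A, l)) X) :
    wordNFA.Reads (.last A) ((l.map fun p => eventLabel p.1 p.2).flatten ++ closeLabel X) .done := by
  induction l generalizing A with
  | nil => simpa using WordNFA.Reads.cons (mem_trans.2 (.inr (.inr ⟨A, X, h, rfl⟩))) (.nil _)
  | cons p l ih =>
    rw [lastAnn_cons] at h
    simpa using WordNFA.Reads.cons (mem_trans.2 (.inr (.inl ⟨A, p.1, p.2, rfl⟩))) (ih h)

theorem mem_accepts {w : List (Letter α)} :
    w ∈ wordNFA.accepts ↔ ∃ x X, compat (lastAnn x) X ∧ w = word x X := by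
  change (∃ p ∈ ({.init} : Set (State α)), ∃ q ∈ ({.done} : Set (State α)),
    wordNFA.Reads p w q) ↔ _
  simp only [Set.mem_singleton_iff, exists_eq_left]
  constructor
  · intro h
    cases h with
    | cons he hw =>
      obtain ⟨A, he⟩ | ⟨_, _, _, he⟩ | ⟨_, _, _, he⟩ := mem_trans.1 he <;>
        simp only [Prod.ext_iff] at he
      · obtain ⟨-, rfl, rfl⟩ := he
        obtain ⟨l, X, hc, rfl⟩ := exists_of_reads_last_done hw
        exact ⟨(A, l), X, hc, by simp [word]⟩
      · cases he.1
      · cases he.1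
  · rintro ⟨⟨A, l⟩, X, hc, rfl⟩
    simpa [word] using
      WordNFA.Reads.cons (mem_trans.2 (.inl ⟨A, rfl⟩)) (reads_last_done_of_compat hc)

theorem recognises {Q : Type} {A : NFA (Xi α ⊕ Theta α) Q} (hA : A.accepts = wordNFA.accepts) :
    Recognises A (fun s t => ∃ (x : FLObs α) (y : List α × Option (Finset α)),
      s = phi x ∧ t = psiF y ∧ failRel x y) := by
  intro s t
  rw [hA]
  constructor
  · rintro ⟨x, ⟨_, X⟩, rfl, rfl, rfl, hc⟩
    exact ⟨word x X, mem_accepts.2 ⟨x, X, hc, rfl⟩, filterMap_getLeft_word x X,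
      filterMap_getRight_word x X⟩
  · rintro ⟨w, hw, rfl, rfl⟩
    obtain ⟨x, X, hc, rfl⟩ := mem_accepts.1 hw
    exact ⟨x, (x.2.map Prod.fst, X), filterMap_getLeft_word x X, filterMap_getRight_word x X,
      rfl, hc⟩

end FailuresTransducer

theorem stmt8_general {α : Type} [Fintype α] [LinearOrder α] :
    (∃ (n : ℕ) (A : NFA (Xi α ⊕ Theta α) (Fin n)),
      Recognises A (fun s t => ∃ (x : FLObs α) (y : List α × Option (Finset α)),
        s = phi x ∧ t = psiF y ∧ failRel x y)) ∧
    (∀ y₁ y₂ : List α × Option (Finset α),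
      psiF y₁ <+: psiF y₂ → inducedRel extLE failRel y₁ y₂) := by
  refine ⟨?_, fun _ _ => inducedRel_extLE_failRel_of_psiF_prefix⟩
  obtain ⟨n, A, hA⟩ := NFA.exists_fin_accepts_eq (FailuresTransducer.wordNFA (α := α)).toNFA
  exact ⟨n, A, FailuresTransducer.recognises
    (hA.trans (WordNFA.toNFA_accepts _ FailuresTransducer.label_ne_nil))⟩

/-- The stable failures model `F` is rational: (a) there is an NFA with finitely many
states over `Ξ ⊕ Θ` recognising `{(φ x, ψ y) : (x, y) ∈ fail_Σ}`, and (b) `ψ` is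
order-reflecting: whenever `ψ y₁` is a prefix of `ψ y₂` then `y₁ ≼ y₂` in the relation
induced by `fail_Σ` from the extension order on `FL_Σ`. -/
theorem stmt8 {α : Type} [Fintype α] [Nonempty α] [LinearOrder α] :
    (∃ (n : ℕ) (A : NFA (Xi α ⊕ Theta α) (Fin n)),
      Recognises A (fun s t => ∃ (x : FLObs α) (y : List α × Option (Finset α)),
        s = phi x ∧ t = psiF y ∧ failRel x y)) ∧
    (∀ y₁ y₂ : List α × Option (Finset α),
      psiF y₁ <+: psiF y₂ → inducedRel extLE failRel y₁ y₂) :=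
  stmt8_general
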